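/- Fix n, t, s, q ∈ ℕ with n ≥ 1 and set N = n + t, and let 𝒢 be a finite gate set whose gates all have arity at most q, with circuits and the relation "a circuit computes f" (success probability strictly greater than 1/2 on every input) defined as follows: a circuit of size k over 𝒢 on N qubits is a list of k pairs (gate, injective wire assignment), its operator C is the composition of the gate applications, and it computes f : (Fin n → Fin 2) → Fin 2 if ‖Π_{f(x)}(C e_{pad(x)})‖² > 1/2 for every x. If (card(𝒢) · N^q + 1)^s < 2^(2^n), then there exists a Boolean function f : (Fin n → Fin 2) → Fin 2 that is not computed by any circuit over 𝒢 of size at most s on N qubits. (Existence of Boolean functions of quantum circuit complexity exceeding s; the conclusion of the paper's counting claim, Claim C.1.) -/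

import Mathlib

/-- `pad n t x` is the length-`(n+t)` bitstring equal to `x` on the first `n`
coordinates and `0` on the remaining `t`. -/
def pad (n t : ℕ) (x : Fin n → Fin 2) : Fin (n + t) → Fin 2 :=
  fun j => if h : (j : ℕ) < n then x ⟨j, h⟩ else 0

/-- Orthogonal projection onto bitstrings whose first bit equals `b`. -/
def firstBitProj {N : ℕ} (hN : 0 < N) (b : Fin 2)
    (v : EuclideanSpace ℂ (Fin N → Fin 2)) : EuclideanSpace ℂ (Fin N → Fin 2) :=
  WithLp.toLp 2 (fun s => if s ⟨0, hN⟩ = b then v s else 0)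

/-- A quantum gate: an arity (at most `q`) together with a unitary on the
corresponding space. -/
structure Gate (q : ℕ) where
  arity : ℕ
  arity_le : arity ≤ q
  U : EuclideanSpace ℂ (Fin arity → Fin 2) ≃ₗᵢ[ℂ] EuclideanSpace ℂ (Fin arity → Fin 2)

/-- `updAt emb σ c` agrees with `σ` off the range of `emb` and equals `c k` at
`emb k`. -/
noncomputable def updAt {a N : ℕ} (emb : Fin a → Fin N) (σ : Fin N → Fin 2)
    (c : Fin a → Fin 2) : Fin N → Fin 2 :=
  fun j => if h : ∃ k, emb k = j then c h.choose else σ j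

/-- Application of a gate `g` along an (injective) wire assignment
`emb : Fin g.arity → Fin N`. -/
noncomputable def applyGate {q N : ℕ} (g : Gate q) (emb : Fin g.arity → Fin N)
    (v : EuclideanSpace ℂ (Fin N → Fin 2)) : EuclideanSpace ℂ (Fin N → Fin 2) :=
  WithLp.toLp 2 (fun σ => ∑ c : Fin g.arity → Fin 2,
    (g.U (EuclideanSpace.single c 1)) (σ ∘ emb) * v (updAt emb σ c))

/-- One step of a circuit over the gate set `G`: a gate together with an
injective wire assignment. -/
structure CircuitStep (q N : ℕ) {ι : Type*} (G : ι → Gate q) where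
  gate : ι
  wires : Fin (G gate).arity → Fin N
  inj : Function.Injective wires

/-- The operator of a circuit: the composition of the gate applications in
order. -/
noncomputable def circuitOp {q N : ℕ} {ι : Type*} (G : ι → Gate q) :
    List (CircuitStep q N G) →
      EuclideanSpace ℂ (Fin N → Fin 2) → EuclideanSpace ℂ (Fin N → Fin 2)
  | [] => id
  | step :: rest => fun v => circuitOp G rest (applyGate (G step.gate) step.wires v)

/-!
Each gate acts, on every slice of the state with the wires outside its range fixed, as its
unitary; so gates, and hence circuits, preserve the norm. A circuit therefore sends each
basis state to a unit vector, whose first-bit projections onto `0` and `1` cannot both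
have squared norm `> 1/2`: a circuit computes at most one Boolean function. Encoding a gate
application by the gate and its wires padded to length `q`, a circuit of size at most `s`
is a word of length at most `s` over an alphabet of `card ι * N ^ q` letters, and there
are at most `(card ι * N ^ q + 1) ^ s < 2 ^ (2 ^ n)` of those.
-/

open Function

lemma EuclideanSpace.linearMap_apply_eq_sum {𝕜 I J : Type*} [RCLike 𝕜] [Fintype I]
    [DecidableEq I] (U : EuclideanSpace 𝕜 I →ₗ[𝕜] EuclideanSpace 𝕜 J) (w : EuclideanSpace 𝕜 I)
    (j : J) : U w j = ∑ i, U (EuclideanSpace.single i 1) j * w i := by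
  conv_lhs => rw [← (EuclideanSpace.basisFun I 𝕜).sum_repr w]
  simp [EuclideanSpace.basisFun_apply, mul_comm]

section Slice

variable {𝕜 I A B : Type*} [RCLike 𝕜]

def slice (E : I ≃ A × B) (v : EuclideanSpace 𝕜 I) (b : B) : EuclideanSpace 𝕜 A :=
  WithLp.toLp 2 fun a => v (E.symm (a, b))

lemma norm_sq_eq_sum_norm_sq_slice [Fintype I] [Fintype A] [Fintype B] (E : I ≃ A × B)
    (v : EuclideanSpace 𝕜 I) :
    ‖v‖ ^ 2 = ∑ b, ‖slice E v b‖ ^ 2 := by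
  simp only [EuclideanSpace.norm_sq_eq, slice]
  rw [← E.symm.sum_comp, Fintype.sum_prod_type_right]

end Slice

noncomputable def wireSplit {a N : ℕ} (emb : Fin a → Fin N) (hinj : Injective emb) :
    (Fin N → Fin 2) ≃ (Fin a → Fin 2) × ({j // j ∉ Set.range emb} → Fin 2) where
  toFun σ := (σ ∘ emb, fun j => σ j)
  invFun p j := if h : ∃ k, emb k = j then p.1 h.choose else p.2 ⟨j, h⟩
  left_inv σ := by
    funext j
    by_cases h : ∃ k, emb k = j
    · simp only [dif_pos h]; exact congrArg σ h.choose_spec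
    · simp only [dif_neg h]
  right_inv p := by
    refine Prod.ext (funext fun k => ?_) (funext fun j => dif_neg j.2)
    have h : ∃ k', emb k' = emb k := ⟨k, rfl⟩
    simp only [Function.comp_apply, dif_pos h]
    exact congrArg p.1 (hinj h.choose_spec)

lemma slice_applyGate {q N : ℕ} (g : Gate q) {emb : Fin g.arity → Fin N} (hinj : Injective emb)
    (v : EuclideanSpace ℂ (Fin N → Fin 2)) (τ : {j // j ∉ Set.range emb} → Fin 2) :
    slice (wireSplit emb hinj) (applyGate g emb v) τ = g.U (slice (wireSplit emb hinj) v τ) := by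
  ext c
  set E := wireSplit emb hinj
  have hwires : E.symm (c, τ) ∘ emb = c := congrArg Prod.fst (E.apply_symm_apply (c, τ))
  have hupd (c' : Fin g.arity → Fin 2) : updAt emb (E.symm (c, τ)) c' = E.symm (c', τ) :=
    congrArg (fun τ' => E.symm (c', τ')) (congrArg Prod.snd (E.apply_symm_apply (c, τ)))
  refine Eq.trans ?_
    (EuclideanSpace.linearMap_apply_eq_sum g.U.toLinearEquiv.toLinearMap _ c).symm
  simp only [slice, applyGate, hwires, hupd]
  rfl

lemma norm_applyGate {q N : ℕ} (g : Gate q) {emb : Fin g.arity → Fin N} (hinj : Injective emb)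
    (v : EuclideanSpace ℂ (Fin N → Fin 2)) : ‖applyGate g emb v‖ = ‖v‖ := by
  rw [← sq_eq_sq₀ (norm_nonneg _) (norm_nonneg _),
    norm_sq_eq_sum_norm_sq_slice (wireSplit emb hinj),
    norm_sq_eq_sum_norm_sq_slice (wireSplit emb hinj)]
  simp only [slice_applyGate, LinearIsometryEquiv.norm_map]

lemma norm_circuitOp {q N : ℕ} {ι : Type*} (G : ι → Gate q) (C : List (CircuitStep q N G))
    (v : EuclideanSpace ℂ (Fin N → Fin 2)) : ‖circuitOp G C v‖ = ‖v‖ := by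
  induction C generalizing v with
  | nil => rfl
  | cons step rest ih => rw [circuitOp, ih, norm_applyGate _ step.inj]

lemma norm_sq_firstBitProj_add_le {N : ℕ} (hN : 0 < N) {b b' : Fin 2} (hb : b ≠ b')
    (v : EuclideanSpace ℂ (Fin N → Fin 2)) :
    ‖firstBitProj hN b v‖ ^ 2 + ‖firstBitProj hN b' v‖ ^ 2 ≤ ‖v‖ ^ 2 := by
  simp only [EuclideanSpace.norm_sq_eq, ← Finset.sum_add_distrib]
  refine Finset.sum_le_sum fun σ _ => ?_
  simp only [firstBitProj]
  by_cases h : σ ⟨0, hN⟩ = b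
  · simp [h, hb]
  · split_ifs <;> simp

def Computes {n t q : ℕ} {ι : Type*} (G : ι → Gate q) (hN : 0 < n + t)
    (C : List (CircuitStep q (n + t) G)) (f : (Fin n → Fin 2) → Fin 2) : Prop :=
  ∀ x, 1 / 2 < ‖firstBitProj hN (f x) (circuitOp G C (EuclideanSpace.single (pad n t x) 1))‖ ^ 2

lemma Computes.unique {n t q : ℕ} {ι : Type*} {G : ι → Gate q} {hN : 0 < n + t}
    {C : List (CircuitStep q (n + t) G)} {f g : (Fin n → Fin 2) → Fin 2}
    (hf : Computes G hN C f) (hg : Computes G hN C g) : f = g := by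
  funext x
  by_contra hfg
  have hunit : ‖circuitOp G C (EuclideanSpace.single (pad n t x) 1)‖ = 1 := by
    rw [norm_circuitOp, PiLp.norm_single, norm_one]
  have := norm_sq_firstBitProj_add_le hN hfg (circuitOp G C (EuclideanSpace.single (pad n t x) 1))
  rw [hunit] at this
  linarith [hf x, hg x]

def CircuitStep.encode {q N : ℕ} {ι : Type*} (G : ι → Gate q) (w₀ : Fin N) :
    CircuitStep q N G ↪ ι × (Fin q → Fin N) where
  toFun st := (st.gate, fun j => if h : (j : ℕ) < (G st.gate).arity then st.wires ⟨j, h⟩ else w₀)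
  inj' := by
    rintro ⟨i, w, _⟩ ⟨i', w', _⟩ h
    obtain ⟨rfl, hw⟩ := Prod.ext_iff.mp h
    obtain rfl : w = w' := funext fun k => by
      simpa [k.2] using congrFun hw ⟨k, k.2.trans_le (G i).arity_le⟩
    rfl

lemma Fintype.card_le_of_injective_list {α β γ : Type*} [Fintype β] [Fintype γ] (e : α ↪ β)
    {s : ℕ} (c : γ → List α) (hc : Injective c) (hlen : ∀ x, (c x).length ≤ s) :
    Fintype.card γ ≤ (Fintype.card β + 1) ^ s := by
  have hcode : Injective fun x (j : Fin s) => ((c x)[(j : ℕ)]?).map e := by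
    refine fun x y hxy => hc (List.ext_getElem? fun j => ?_)
    by_cases hj : j < s
    · exact Option.map_injective e.injective (congrFun hxy ⟨j, hj⟩)
    · simp [(hlen x).trans (not_lt.mp hj), (hlen y).trans (not_lt.mp hj)]
  simpa [Fintype.card_fun] using Fintype.card_le_of_injective _ hcode

/-- If `(card 𝒢 · N^q + 1)^s < 2^(2^n)` then there exists a Boolean function
`f : {0,1}ⁿ → {0,1}` not computed (with per-input success probability `> 1/2`)
by any circuit of size at most `s` over the gate set `G` on `N = n + t`
qubits. -/
theorem exists_hard_function (n t s q : ℕ) (hn : 1 ≤ n)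
    {ι : Type*} [Fintype ι] (G : ι → Gate q)
    (hcount : (Fintype.card ι * (n + t) ^ q + 1) ^ s < 2 ^ (2 ^ n)) :
    ∃ f : (Fin n → Fin 2) → Fin 2,
      ¬ ∃ C : List (CircuitStep q (n + t) G), C.length ≤ s ∧
          ∀ x, 1 / 2 < ‖firstBitProj (show 0 < n + t by omega) (f x)
            (circuitOp G C (EuclideanSpace.single (pad n t x) 1))‖ ^ 2 := by
  by_contra! hhard
  choose C hlen hC using hhard
  have hinj : Injective C := fun f g hfg => Computes.unique (hC f) (hfg ▸ hC g)
  have := Fintype.card_le_of_injective_list (CircuitStep.encode G ⟨0, by omega⟩) C hinj hlen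
  simp only [Fintype.card_fun, Fintype.card_prod, Fintype.card_fin] at this
  omega
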